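/- arXiv:2305.05769 — 4 statements merged into one kernel-verified Lean document; each statement's English description precedes it below -/
import Mathlib

section
/- The function (ρ, m, E) ↦ E - ‖m‖²/(2ρ) is concave on the open half-space {ρ > 0} ⊂ ℝ × ℝ^d × ℝ. -/
/-! The kinetic energy `‖m‖² / (2ρ)` is half the quadratic-over-linear function
`(ρ, m) ↦ ‖m‖² / ρ`, and the latter is convex on `ρ > 0`: with weights `a, b > 0`, Sedrakyan's
inequality `(u + v)² / (s + t) ≤ u² / s + v² / t` applied to `u = ‖a • m₁‖`, `v = ‖b • m₂‖`,
`s = a ρ₁`, `t = b ρ₂` is exactly the convexity inequality. Subtracting it from the linear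
total energy `E` gives a concave function. -/

open Finset in
theorem add_sq_div_add_le_sq_div_add_sq_div {u v s t : ℝ} (hs : 0 < s) (ht : 0 < t) :
    (u + v) ^ 2 / (s + t) ≤ u ^ 2 / s + v ^ 2 / t := by
  simpa [Fin.sum_univ_two] using
    sq_sum_div_le_sum_sq_div univ ![u, v] (g := ![s, t]) (by simp [Fin.forall_fin_two, hs, ht])

section QuadraticOverLinear

variable {E : Type*} [SeminormedAddCommGroup E]

theorem norm_add_sq_div_add_le (x y : E) {s t : ℝ}
    (hs : 0 < s) (ht : 0 < t) : ‖x + y‖ ^ 2 / (s + t) ≤ ‖x‖ ^ 2 / s + ‖y‖ ^ 2 / t :=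
  calc ‖x + y‖ ^ 2 / (s + t) ≤ (‖x‖ + ‖y‖) ^ 2 / (s + t) := by
        gcongr
        exact norm_add_le x y
    _ ≤ ‖x‖ ^ 2 / s + ‖y‖ ^ 2 / t := add_sq_div_add_le_sq_div_add_sq_div hs ht

theorem convexOn_norm_sq_div [NormedSpace ℝ E] :
    ConvexOn ℝ {p : ℝ × E | 0 < p.1} fun p => ‖p.2‖ ^ 2 / p.1 := by
  refine convexOn_iff_forall_pos.2
    ⟨(convex_Ioi 0).linear_preimage (LinearMap.fst ℝ ℝ E), ?_⟩
  rintro ⟨ρ, x⟩ (hρ : 0 < ρ) ⟨σ, y⟩ (hσ : 0 < σ) a b ha hb -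
  calc ‖a • x + b • y‖ ^ 2 / (a * ρ + b * σ)
      ≤ ‖a • x‖ ^ 2 / (a * ρ) + ‖b • y‖ ^ 2 / (b * σ) :=
        norm_add_sq_div_add_le _ _ (by positivity) (by positivity)
    _ = a * (‖x‖ ^ 2 / ρ) + b * (‖y‖ ^ 2 / σ) := by
        rw [norm_smul, norm_smul, Real.norm_of_nonneg ha.le, Real.norm_of_nonneg hb.le]
        field_simp

end QuadraticOverLinear

theorem internal_energy_concave (d : ℕ) :
    ConcaveOn ℝ {U : ℝ × EuclideanSpace ℝ (Fin d) × ℝ | 0 < U.1}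
      (fun U => U.2.2 - ‖U.2.1‖ ^ 2 / (2 * U.1)) := by
  set E := EuclideanSpace ℝ (Fin d)
  let density_momentum : ℝ × E × ℝ →ₗ[ℝ] ℝ × E :=
    (LinearMap.fst ℝ ℝ (E × ℝ)).prod (LinearMap.fst ℝ E ℝ ∘ₗ LinearMap.snd ℝ ℝ (E × ℝ))
  have kinetic : ConvexOn ℝ {U : ℝ × E × ℝ | 0 < U.1} fun U => ‖U.2.1‖ ^ 2 / (2 * U.1) :=
    ((convexOn_norm_sq_div.comp_linearMap density_momentum).smul (c := (1 / 2 : ℝ))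
      (by norm_num)).congr fun U _ =>
      show (1 / 2 : ℝ) * (‖U.2.1‖ ^ 2 / U.1) = _ by ring
  have energy : ConcaveOn ℝ {U : ℝ × E × ℝ | 0 < U.1} fun U => U.2.2 :=
    (LinearMap.snd ℝ E ℝ ∘ₗ LinearMap.snd ℝ ℝ (E × ℝ)).concaveOn kinetic.1
  exact energy.sub kinetic
end

section
/- Let M be a diagonal n×n matrix with strictly positive diagonal entries and L an n×n matrix with L𝟙 = 0. Suppose M + Δt·L is invertible with (M + Δt·L)⁻¹ ≥ 0 entrywise for some Δt > 0. If b ∈ ℝⁿ satisfies M⁻¹b ≥ ε𝟙 entrywise for some ε > 0, then the solution x of (M + Δt·L)x = b satisfies x ≥ ε𝟙 entrywise. -/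
/-!
Subtracting ε𝟙 from `x` and using `L𝟙 = 0` gives
`(M + Δt L)(x - ε𝟙) = b - εM𝟙 = M (M⁻¹b - ε𝟙) ≥ 0`, because a diagonal matrix with
positive diagonal has nonnegative entries. Applying the entrywise nonnegative inverse of
`M + Δt L` yields `x - ε𝟙 ≥ 0`.
-/

namespace Matrix

variable {ι R : Type*}

theorem IsDiag.nonneg_of_diag_nonneg [Zero R] [Preorder R] {M : Matrix ι ι R} (hM : M.IsDiag)
    (hdiag : ∀ i, 0 ≤ M i i) (i j : ι) : 0 ≤ M i j := by
  rcases eq_or_ne i j with rfl | hij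
  · exact hdiag i
  · exact (hM hij).ge

variable [Fintype ι]

theorem mulVec_mono_of_nonneg [Semiring R] [PartialOrder R] [IsOrderedRing R]
    {A : Matrix ι ι R} (hA : ∀ i j, 0 ≤ A i j) {v w : ι → R} (hvw : v ≤ w) :
    A *ᵥ v ≤ A *ᵥ w :=
  fun i => Finset.sum_le_sum fun j _ => mul_le_mul_of_nonneg_left (hvw j) (hA i j)

theorem le_of_mulVec_le_mulVec_of_inv_nonneg [DecidableEq ι] [CommRing R] [PartialOrder R]
    [IsOrderedRing R] {A : Matrix ι ι R} (hA : IsUnit A) (hinv : ∀ i j, 0 ≤ A⁻¹ i j)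
    {v w : ι → R} (h : A *ᵥ v ≤ A *ᵥ w) : v ≤ w := by
  have hmono := mulVec_mono_of_nonneg hinv h
  rwa [mulVec_mulVec, mulVec_mulVec, nonsing_inv_mul _ ((isUnit_iff_isUnit_det A).mp hA),
    one_mulVec, one_mulVec] at hmono

theorem IsDiag.isUnit_iff [DecidableEq ι] [CommRing R] {M : Matrix ι ι R} (hM : M.IsDiag) :
    IsUnit M ↔ ∀ i, IsUnit (M i i) := by
  conv_lhs => rw [← hM.diagonal_diag]
  rw [isUnit_diagonal, Pi.isUnit_iff]
  rfl

theorem mulVec_const_eq_zero [CommSemiring R] {L : Matrix ι ι R}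
    (hL : L *ᵥ (fun _ => 1) = 0) (c : R) : L *ᵥ (fun _ => c) = 0 := by
  have hc : (fun _ => c : ι → R) = c • fun _ => 1 := by ext; simp
  rw [hc, mulVec_smul, hL, smul_zero]

end Matrix

open Matrix in
theorem positivity_from_monotone_system_general (n : ℕ) (M L : Matrix (Fin n) (Fin n) ℝ)
    (hMdiag : ∀ i j, i ≠ j → M i j = 0) (hMpos : ∀ i, 0 < M i i)
    (hL : L.mulVec (fun _ => 1) = 0)
    (dt : ℝ)
    (hunit : IsUnit (M + dt • L))
    (hinv : ∀ i j, 0 ≤ (M + dt • L)⁻¹ i j)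
    (ε : ℝ)
    (b : Fin n → ℝ) (hb : ∀ i, ε ≤ M⁻¹.mulVec b i)
    (x : Fin n → ℝ) (hx : (M + dt • L).mulVec x = b) :
    ∀ i, ε ≤ x i := by
  have hMisDiag : M.IsDiag := fun i j hij => hMdiag i j hij
  have hMnonneg := hMisDiag.nonneg_of_diag_nonneg fun i => (hMpos i).le
  have hMunit := hMisDiag.isUnit_iff.mpr fun i => (hMpos i).ne'.isUnit
  have hMε : M *ᵥ (fun _ => ε) ≤ b :=
    calc M *ᵥ (fun _ => ε)
        ≤ M *ᵥ (M⁻¹ *ᵥ b) := mulVec_mono_of_nonneg hMnonneg hb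
      _ = b := by
        rw [mulVec_mulVec, mul_nonsing_inv _ ((isUnit_iff_isUnit_det M).mp hMunit), one_mulVec]
  have hAε : (M + dt • L) *ᵥ (fun _ => ε) ≤ (M + dt • L) *ᵥ x := by
    rwa [hx, add_mulVec, smul_mulVec, mulVec_const_eq_zero hL, smul_zero, add_zero]
  exact le_of_mulVec_le_mulVec_of_inv_nonneg hunit hinv hAε

theorem positivity_from_monotone_system (n : ℕ) (M L : Matrix (Fin n) (Fin n) ℝ)
    (hMdiag : ∀ i j, i ≠ j → M i j = 0) (hMpos : ∀ i, 0 < M i i)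
    (hL : L.mulVec (fun _ => 1) = 0)
    (dt : ℝ) (hdt : 0 < dt)
    (hunit : IsUnit (M + dt • L))
    (hinv : ∀ i j, 0 ≤ (M + dt • L)⁻¹ i j)
    (ε : ℝ) (hε : 0 < ε)
    (b : Fin n → ℝ) (hb : ∀ i, ε ≤ M⁻¹.mulVec b i)
    (x : Fin n → ℝ) (hx : (M + dt • L).mulVec x = b) :
    ∀ i, ε ≤ x i :=
  positivity_from_monotone_system_general n M L hMdiag hMpos hL dt hunit hinv ε b hb x hx
end

section
/- Let ρ̄ > 0, ε ∈ (0, ρ̄], let ρ : X → ℝ be a function on a finite set X with mean value ρ̄ (i.e., there exist weights making ρ̄ a convex combination of the values), and define θ = min{1, (ρ̄ - ε)/(ρ̄ - min_x ρ(x))} when min_x ρ(x) < ρ̄. Then the function ρ̂(x) = θ(ρ(x) - ρ̄) + ρ̄ satisfies ρ̂(x) ≥ ε for all x ∈ X, and has the same mean ρ̄. -/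
/-!
Scaling about the mean by any factor `θ` preserves every weighted mean, since the deviations
`ρ x - ρbar` have weighted mean zero. For the lower bound only the minimum matters: with
`0 ≤ θ`, the scaled function is smallest where `ρ` is, and `θ` is chosen so that
`θ * (ρbar - min ρ) ≤ ρbar - ε`.
-/

section

variable {K : Type*}

theorem Finset.sum_mul_mul_sub_add_eq_of_sum_mul_eq [CommRing K] {ι : Type*} (s : Finset ι)
    {w ρ : ι → K} {c : K} (hw1 : ∑ x ∈ s, w x = 1) (hmean : ∑ x ∈ s, w x * ρ x = c) (θ : K) :
    ∑ x ∈ s, w x * (θ * (ρ x - c) + c) = c := by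
  have hexpand : ∀ x, w x * (θ * (ρ x - c) + c) = θ * (w x * ρ x) - θ * c * w x + c * w x :=
    fun x => by ring
  simp only [hexpand, Finset.sum_add_distrib, Finset.sum_sub_distrib, ← Finset.mul_sum, hmean,
    hw1]
  ring

variable [Field K] [LinearOrder K] [IsStrictOrderedRing K]

theorem le_mul_sub_add_of_mul_sub_le {θ c ε m y : K} (hθ : 0 ≤ θ) (hmy : m ≤ y)
    (h : θ * (c - m) ≤ c - ε) : ε ≤ θ * (y - c) + c := by
  nlinarith [mul_le_mul_of_nonneg_left hmy hθ]

noncomputable def zhangShuScale (c ε m : K) : K :=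
  if m < c then min 1 ((c - ε) / (c - m)) else 1

variable {c ε m : K}

theorem zhangShuScale_nonneg (hεc : ε ≤ c) : 0 ≤ zhangShuScale c ε m := by
  unfold zhangShuScale
  split_ifs with hmc
  · exact le_min zero_le_one (div_nonneg (sub_nonneg.2 hεc) (sub_pos.2 hmc).le)
  · exact zero_le_one

theorem zhangShuScale_mul_sub_le (hεc : ε ≤ c) : zhangShuScale c ε m * (c - m) ≤ c - ε := by
  unfold zhangShuScale
  split_ifs with hmc
  · calc min 1 ((c - ε) / (c - m)) * (c - m) ≤ (c - ε) / (c - m) * (c - m) :=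
          mul_le_mul_of_nonneg_right (min_le_right _ _) (sub_pos.2 hmc).le
      _ = c - ε := div_mul_cancel₀ _ (sub_pos.2 hmc).ne'
  · linarith [not_lt.1 hmc]

end

theorem zhang_shu_density_limiter_general (ι : Type*) [Fintype ι] [Nonempty ι]
    (ρbar ε : ℝ) (hερ : ε ≤ ρbar)
    (w : ι → ℝ) (hw1 : ∑ x, w x = 1)
    (ρ : ι → ℝ) (hmean : ∑ x, w x * ρ x = ρbar)
    (m : ℝ) (hm : m = Finset.univ.inf' Finset.univ_nonempty ρ)
    (θ : ℝ) (hθ : θ = if m < ρbar then min 1 ((ρbar - ε) / (ρbar - m)) else 1) :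
    (∀ x, ε ≤ θ * (ρ x - ρbar) + ρbar) ∧
    (∑ x, w x * (θ * (ρ x - ρbar) + ρbar) = ρbar) := by
  refine ⟨fun x => ?_, Finset.univ.sum_mul_mul_sub_add_eq_of_sum_mul_eq hw1 hmean θ⟩
  rw [show θ = zhangShuScale ρbar ε m from hθ]
  exact le_mul_sub_add_of_mul_sub_le (zhangShuScale_nonneg hερ)
    (hm ▸ Finset.inf'_le _ (Finset.mem_univ x)) (zhangShuScale_mul_sub_le hερ)

theorem zhang_shu_density_limiter (ι : Type*) [Fintype ι] [Nonempty ι]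
    (ρbar ε : ℝ) (hρbar : 0 < ρbar) (hε : 0 < ε) (hερ : ε ≤ ρbar)
    (w : ι → ℝ) (hw : ∀ x, 0 ≤ w x) (hw1 : ∑ x, w x = 1)
    (ρ : ι → ℝ) (hmean : ∑ x, w x * ρ x = ρbar)
    (m : ℝ) (hm : m = Finset.univ.inf' Finset.univ_nonempty ρ)
    (θ : ℝ) (hθ : θ = if m < ρbar then min 1 ((ρbar - ε) / (ρbar - m)) else 1) :
    (∀ x, ε ≤ θ * (ρ x - ρbar) + ρbar) ∧
    (∑ x, w x * (θ * (ρ x - ρbar) + ρbar) = ρbar) :=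
  zhang_shu_density_limiter_general ι ρbar ε hερ w hw1 ρ hmean m hm θ hθ
end

section
/- Let λ̃ := Δt/Δx² > 0 (with coefficient absorbed), σ̃ > 1/2, and let A_D be the (2N)×(2N) one-dimensional Q¹ IIPG stiffness matrix given explicitly by: first row (1/Δx, -1/Δx, 0, …), last row (…, -1/Δx, 1/Δx), and interior rows of the repeating pattern (-1/(2Δx), (1+2σ̃)/(2Δx), (1-2σ̃)/(2Δx), -1/(2Δx)) centered appropriately. Then every row sum of A_D is zero, all diagonal entries are positive, and all off-diagonal entries are nonpositive. -/
/-- The 1D `Q¹` IIPG stiffness matrix on a uniform mesh of `N` cells (`2N` degrees of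
freedom), with mesh size `dx` and interior penalty parameter `σ`, Neumann boundary
conditions, evaluated with 2-point Gauss–Lobatto quadrature. -/
noncomputable def iipg1D (N : ℕ) (dx σ : ℝ) : Matrix (Fin (2 * N)) (Fin (2 * N)) ℝ :=
  fun i j =>
    if i.val = 0 then
      (if j.val = 0 then 1 / dx else if j.val = 1 then -(1 / dx) else 0)
    else if i.val = 2 * N - 1 then
      (if j.val = 2 * N - 1 then 1 / dx else if j.val = 2 * N - 2 then -(1 / dx) else 0)
    else if i.val % 2 = 1 then
      (if j.val + 1 = i.val then -(1 / (2 * dx))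
       else if j.val = i.val then (1 + 2 * σ) / (2 * dx)
       else if j.val = i.val + 1 then (1 - 2 * σ) / (2 * dx)
       else if j.val = i.val + 2 then -(1 / (2 * dx)) else 0)
    else
      (if j.val + 2 = i.val then -(1 / (2 * dx))
       else if j.val + 1 = i.val then (1 - 2 * σ) / (2 * dx)
       else if j.val = i.val then (1 + 2 * σ) / (2 * dx)
       else if j.val = i.val + 1 then -(1 / (2 * dx)) else 0)

/-!
Every interior row of the matrix is the stencil `(-1, 1 + 2σ, 1 - 2σ, -1) / (2 dx)` (reversed on
even rows) and the boundary rows are `(1, -1) / dx`, so each row sums to zero. The only entry whose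
sign depends on `σ` is the coupling `(1 - 2σ) / (2 dx)` across a cell interface, which is
nonpositive exactly when `σ ≥ 1/2`.
-/

theorem Fin.sum_ite_val_eq {M : Type*} [AddCommMonoid M] {n a : ℕ} (ha : a < n) (x : M) :
    ∑ j : Fin n, (if j.val = a then x else 0) = x := by
  simpa [Fin.ext_iff] using Finset.sum_ite_eq' Finset.univ (⟨a, ha⟩ : Fin n) (fun _ => x)

section

variable {N : ℕ} {dx σ : ℝ}

theorem iipg1D_row_sum_eq_zero (i : Fin (2 * N)) : ∑ j, iipg1D N dx σ i j = 0 := by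
  have hi := i.isLt
  by_cases hfirst : i.val = 0
  · have hrow : ∀ j, iipg1D N dx σ i j =
        (if j.val = 0 then 1 / dx else 0) + (if j.val = 1 then -(1 / dx) else 0) := by
      intro j; simp only [iipg1D]; split_ifs <;> first | omega | ring1
    simp (disch := omega) only [hrow, Finset.sum_add_distrib, Fin.sum_ite_val_eq]
    ring
  by_cases hlast : i.val = 2 * N - 1
  · have hrow : ∀ j, iipg1D N dx σ i j = (if j.val = 2 * N - 1 then 1 / dx else 0) +
        (if j.val = 2 * N - 2 then -(1 / dx) else 0) := by
      intro j; simp only [iipg1D]; split_ifs <;> first | omega | ring1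
    simp (disch := omega) only [hrow, Finset.sum_add_distrib, Fin.sum_ite_val_eq]
    ring
  by_cases hodd : i.val % 2 = 1
  · have hrow : ∀ j, iipg1D N dx σ i j =
        (if j.val = i.val - 1 then -(1 / (2 * dx)) else 0) +
        (if j.val = i.val then (1 + 2 * σ) / (2 * dx) else 0) +
        (if j.val = i.val + 1 then (1 - 2 * σ) / (2 * dx) else 0) +
        (if j.val = i.val + 2 then -(1 / (2 * dx)) else 0) := by
      intro j; simp only [iipg1D]; split_ifs <;> first | omega | ring1
    simp (disch := omega) only [hrow, Finset.sum_add_distrib, Fin.sum_ite_val_eq]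
    ring
  · have hrow : ∀ j, iipg1D N dx σ i j =
        (if j.val = i.val - 2 then -(1 / (2 * dx)) else 0) +
        (if j.val = i.val - 1 then (1 - 2 * σ) / (2 * dx) else 0) +
        (if j.val = i.val then (1 + 2 * σ) / (2 * dx) else 0) +
        (if j.val = i.val + 1 then -(1 / (2 * dx)) else 0) := by
      intro j; simp only [iipg1D]; split_ifs <;> first | omega | ring1
    simp (disch := omega) only [hrow, Finset.sum_add_distrib, Fin.sum_ite_val_eq]
    ring

theorem iipg1D_diag_pos (hdx : 0 < dx) (hσ : -(1 / 2) < σ) (i : Fin (2 * N)) :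
    0 < iipg1D N dx σ i i := by
  have hcenter : 0 < (1 + 2 * σ) / (2 * dx) := div_pos (by linarith) (by linarith)
  simp only [iipg1D]
  split_ifs <;> first | omega | exact hcenter | positivity

theorem iipg1D_nonpos_of_ne (hdx : 0 ≤ dx) (hσ : 1 / 2 ≤ σ) {i j : Fin (2 * N)} (hij : i ≠ j) :
    iipg1D N dx σ i j ≤ 0 := by
  have hij : i.val ≠ j.val := Fin.val_ne_of_ne hij
  have hcoupling : (1 - 2 * σ) / (2 * dx) ≤ 0 :=
    div_nonpos_of_nonpos_of_nonneg (by linarith) (by linarith)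
  simp only [iipg1D]
  split_ifs <;> first | omega | exact hcoupling | simp only [neg_nonpos]; positivity | exact le_rfl

end

theorem iipg1D_sign_structure_general (N : ℕ) (dx σ : ℝ)
    (hdx : 0 < dx) (hσ : 1 / 2 < σ) :
    (∀ i, ∑ j, iipg1D N dx σ i j = 0) ∧
    (∀ i, 0 < iipg1D N dx σ i i) ∧
    (∀ i j, i ≠ j → iipg1D N dx σ i j ≤ 0) :=
  ⟨iipg1D_row_sum_eq_zero, iipg1D_diag_pos hdx (by linarith),
    fun _ _ => iipg1D_nonpos_of_ne hdx.le hσ.le⟩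

theorem iipg1D_sign_structure (N : ℕ) (hN : 1 ≤ N) (dx σ : ℝ)
    (hdx : 0 < dx) (hσ : 1 / 2 < σ) :
    (∀ i, ∑ j, iipg1D N dx σ i j = 0) ∧
    (∀ i, 0 < iipg1D N dx σ i i) ∧
    (∀ i j, i ≠ j → iipg1D N dx σ i j ≤ 0) :=
  iipg1D_sign_structure_general N dx σ hdx hσ
end
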